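/- Let p be a pebble distribution on the ladder P_n□P_2, and let l and r be vertices lying in columns i_l and i_r respectively with i_l < i_r. Suppose that for some k_l ≥ 1 and k_r ≥ 1 the vertex l is right k_l-reachable and the vertex r is left k_r-reachable, but l and r are not independently reachable (there is no executable rubbling sequence after which both l and r carry at least one pebble). Then every vertex lying in a column strictly between i_l and i_r is reachable from p. -/

import Mathlib

/-!
Suppose a vertex `v = (m, j)` strictly between the columns of `l` and `r` is not reachable, and
let `j'` be the other row. Then `v` never carries a pebble, `(m, j')` never carries two, and
`(m, j')`, `(m - 1, j)` are never occupied together; so the only move that brings a pebble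
leftwards across column `m` is the strict rubbling move `(m, j') + (m - 2, j') → (m - 1, j')`.
Replay a sequence witnessing that `l` is right `k_l`-reachable, but skip these crossings: the
replay keeps the pebble on `(m - 2, j')` instead, and every later pebble built from carried
pebbles is paid for by pebbles on `(m - 2, j')` and its neighbours. This gives a sequence inside
the columns from `l` to `m - 1` putting `k_l` pebbles on `l`. Mirroring the ladder, `r` is
`k_r`-reachable inside the columns from `m + 1` to `r`. The two sequences act on disjoint sets of
vertices, so they can be run one after the other, and `l`, `r` become independently reachable.
-/

open SimpleGraph

/-- A single rubbling move on `G`: either a pebbling move (remove two pebbles at `v`,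
add one at an adjacent vertex `u`) or a strict rubbling move (remove one pebble each at
distinct `v` and `w`, both adjacent to `u`, and add one pebble at `u`). -/
def RubblingStep {V : Type*} [DecidableEq V] (G : SimpleGraph V) (p q : V → ℕ) : Prop :=
  (∃ v u, G.Adj v u ∧ 2 ≤ p v ∧
      q = fun x => if x = v then p x - 2 else if x = u then p x + 1 else p x) ∨
  (∃ v w u, v ≠ w ∧ G.Adj v u ∧ G.Adj w u ∧ 1 ≤ p v ∧ 1 ≤ p w ∧
      q = fun x => if x = v then p x - 1 else if x = w then p x - 1
          else if x = u then p x + 1 else p x)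

/-- `q` is obtainable from `p` by an executable rubbling sequence. -/
def RubblingReach {V : Type*} [DecidableEq V] (G : SimpleGraph V) : (V → ℕ) → (V → ℕ) → Prop :=
  Relation.ReflTransGen (RubblingStep G)

/-- The vertex `u` is `k`-reachable from the distribution `p`. -/
def KReachable {V : Type*} [DecidableEq V] (G : SimpleGraph V) (p : V → ℕ) (u : V) (k : ℕ) : Prop :=
  ∃ q, RubblingReach G p q ∧ k ≤ q u

/-- `p` is solvable: every vertex is reachable. -/
def Solvable {V : Type*} [DecidableEq V] (G : SimpleGraph V) (p : V → ℕ) : Prop :=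
  ∀ u, KReachable G p u 1

/-- The optimal rubbling number: the minimum size of a solvable distribution. -/
noncomputable def optRub {V : Type*} [DecidableEq V] [Fintype V] (G : SimpleGraph V) : ℕ :=
  sInf {m | ∃ p : V → ℕ, Solvable G p ∧ ∑ v, p v = m}

/-- The ladder `P_n □ P_2`. -/
def ladder (n : ℕ) : SimpleGraph (Fin n × Fin 2) :=
  pathGraph n □ pathGraph 2

/-- A rubbling move all of whose vertices lie in the set `S`. -/
def RubblingStepOn {V : Type*} [DecidableEq V] (G : SimpleGraph V) (S : Set V)
    (p q : V → ℕ) : Prop :=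
  (∃ v u, v ∈ S ∧ u ∈ S ∧ G.Adj v u ∧ 2 ≤ p v ∧
      q = fun x => if x = v then p x - 2 else if x = u then p x + 1 else p x) ∨
  (∃ v w u, v ∈ S ∧ w ∈ S ∧ u ∈ S ∧ v ≠ w ∧ G.Adj v u ∧ G.Adj w u ∧ 1 ≤ p v ∧ 1 ≤ p w ∧
      q = fun x => if x = v then p x - 1 else if x = w then p x - 1
          else if x = u then p x + 1 else p x)

/-- `q` is obtainable from `p` by an executable rubbling sequence all of whose
moves act only on vertices of `S`. -/
def RubblingReachOn {V : Type*} [DecidableEq V] (G : SimpleGraph V) (S : Set V) :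
    (V → ℕ) → (V → ℕ) → Prop :=
  Relation.ReflTransGen (RubblingStepOn G S)

/-- `x` is left `k`-reachable: `k`-reachable from the restriction of `p` inside the
induced subgraph on the columns up to the column of `x`. -/
def LeftKReachable (n : ℕ) (p : Fin n × Fin 2 → ℕ) (x : Fin n × Fin 2) (k : ℕ) : Prop :=
  ∃ q, RubblingReachOn (ladder n) {v | v.1 ≤ x.1}
      (fun v => if v.1 ≤ x.1 then p v else 0) q ∧ k ≤ q x

/-- `x` is right `k`-reachable: `k`-reachable from the restriction of `p` inside the
induced subgraph on the columns from the column of `x` onwards. -/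
def RightKReachable (n : ℕ) (p : Fin n × Fin 2 → ℕ) (x : Fin n × Fin 2) (k : ℕ) : Prop :=
  ∃ q, RubblingReachOn (ladder n) {v | x.1 ≤ v.1}
      (fun v => if x.1 ≤ v.1 then p v else 0) q ∧ k ≤ q x

section Rubbling

variable {V : Type*} [DecidableEq V] {G : SimpleGraph V}

abbrev pebbleAt (x : V) : V → ℤ := Pi.single x 1

lemma pebbleAt_nonneg (x y : V) : 0 ≤ pebbleAt x y :=
  (Pi.single_nonneg.2 zero_le_one : 0 ≤ pebbleAt x) y

/-- For `s = w` this is the change made by a pebbling move from `s`, otherwise by a strict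
rubbling move. -/
def moveChange (s w u : V) : V → ℤ := pebbleAt u - pebbleAt s - pebbleAt w

lemma moveChange_comm (s w u : V) : moveChange s w u = moveChange w s u := by
  unfold moveChange; abel

lemma rubblingStepOn_iff {S : Set V} {p q : V → ℕ} :
    RubblingStepOn G S p q ↔ ∃ s w u, s ∈ S ∧ w ∈ S ∧ u ∈ S ∧ G.Adj s u ∧ G.Adj w u ∧
      ∀ x, (q x : ℤ) = p x + moveChange s w u x := by
  simp only [moveChange, pebbleAt, Pi.sub_apply, Pi.single_apply]
  constructor
  · rintro (⟨v, u, hv, hu, hvu, hp, rfl⟩ |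
      ⟨v, w, u, hv, hw, hu, hvw, hvu, hwu, hpv, hpw, rfl⟩)
    · refine ⟨v, v, u, hv, hv, hu, hvu, hvu, fun x => ?_⟩
      have := hvu.ne
      dsimp only
      split_ifs <;> subst_vars <;> first | contradiction | omega
    · refine ⟨v, w, u, hv, hw, hu, hvu, hwu, fun x => ?_⟩
      have := hvu.ne; have := hwu.ne
      dsimp only
      split_ifs <;> subst_vars <;> first | contradiction | omega
  · rintro ⟨s, w, u, hs, hw, hu, hsu, hwu, hq⟩
    have hsu' := hsu.ne; have hwu' := hwu.ne
    have hqs := hq s; have hqw := hq w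
    simp only [if_neg hsu', if_neg hwu', if_true] at hqs hqw
    by_cases hsw : s = w
    · subst hsw
      refine Or.inl ⟨s, u, hs, hu, hsu, by simp at hqs; omega, funext fun x => ?_⟩
      have := hq x
      split_ifs at this ⊢ <;> subst_vars <;> first | contradiction | omega
    · simp only [if_neg hsw, if_neg (Ne.symm hsw)] at hqs hqw
      refine Or.inr ⟨s, w, u, hs, hw, hu, hsw, hsu, hwu, by omega, by omega, funext fun x => ?_⟩
      have := hq x
      split_ifs at this ⊢ <;> subst_vars <;> first | contradiction | omega

lemma pebbleAt_add_pebbleAt_le {p q : V → ℕ} {s w u : V} (hus : u ≠ s) (huw : u ≠ w)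
    (hq : ∀ x, (q x : ℤ) = p x + moveChange s w u x) (x : V) :
    pebbleAt s x + pebbleAt w x ≤ p x := by
  have := hq x
  simp only [moveChange, pebbleAt, Pi.sub_apply, Pi.single_apply] at this ⊢
  split_ifs at this ⊢ <;> subst_vars <;> first | contradiction | omega

lemma exists_rubblingStepOn {S : Set V} {p : V → ℕ} {s w u : V} (hs : s ∈ S) (hw : w ∈ S)
    (hu : u ∈ S) (hsu : G.Adj s u) (hwu : G.Adj w u)
    (hp : ∀ x, pebbleAt s x + pebbleAt w x ≤ p x) :
    ∃ q, RubblingStepOn G S p q ∧ ∀ x, (q x : ℤ) = p x + moveChange s w u x := by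
  have hq : ∀ x, ((p x + moveChange s w u x).toNat : ℤ) = p x + moveChange s w u x := by
    intro x
    have := pebbleAt_nonneg u x
    exact Int.toNat_of_nonneg (by simp only [moveChange, Pi.sub_apply]; linarith [hp x])
  exact ⟨_, rubblingStepOn_iff.2 ⟨s, w, u, hs, hw, hu, hsu, hwu, hq⟩, hq⟩

lemma rubblingStep_iff_rubblingStepOn_univ {p q : V → ℕ} :
    RubblingStep G p q ↔ RubblingStepOn G Set.univ p q := by
  simp [RubblingStep, RubblingStepOn]

lemma rubblingReach_eq_rubblingReachOn_univ : RubblingReach G = RubblingReachOn G Set.univ := by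
  have : RubblingStep G = RubblingStepOn G Set.univ := by
    funext p q; exact propext rubblingStep_iff_rubblingStepOn_univ
  unfold RubblingReach RubblingReachOn
  rw [this]

lemma kReachable_of_pebbleAt_add_le {p : V → ℕ} {s w v : V} (hsv : G.Adj s v)
    (hwv : G.Adj w v) (hp : ∀ x, pebbleAt s x + pebbleAt w x ≤ p x) : KReachable G p v 1 := by
  obtain ⟨q, hpq, hq⟩ := exists_rubblingStepOn (Set.mem_univ s) (Set.mem_univ w)
    (Set.mem_univ v) hsv hwv hp
  refine ⟨q, .single (rubblingStep_iff_rubblingStepOn_univ.2 hpq), ?_⟩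
  have := hq v
  simp [moveChange, hsv.ne.symm, hwv.ne.symm] at this
  omega

lemma RubblingStepOn.mono {S T : Set V} (hST : S ⊆ T) {p q : V → ℕ}
    (h : RubblingStepOn G S p q) : RubblingStepOn G T p q := by
  obtain ⟨s, w, u, hs, hw, hu, hsu, hwu, hq⟩ := rubblingStepOn_iff.1 h
  exact rubblingStepOn_iff.2 ⟨s, w, u, hST hs, hST hw, hST hu, hsu, hwu, hq⟩

lemma RubblingReachOn.mono {S T : Set V} (hST : S ⊆ T) {p q : V → ℕ}
    (h : RubblingReachOn G S p q) : RubblingReachOn G T p q :=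
  Relation.ReflTransGen.mono (fun _ _ => RubblingStepOn.mono hST) _ _ h

lemma RubblingReachOn.rubblingReach {S : Set V} {p q : V → ℕ} (h : RubblingReachOn G S p q) :
    RubblingReach G p q := by
  rw [rubblingReach_eq_rubblingReachOn_univ]
  exact h.mono (Set.subset_univ S)

lemma RubblingStepOn.add {S : Set V} {p q : V → ℕ} (h : RubblingStepOn G S p q) (d : V → ℕ) :
    RubblingStepOn G S (p + d) (q + d) := by
  obtain ⟨s, w, u, hs, hw, hu, hsu, hwu, hq⟩ := rubblingStepOn_iff.1 h
  refine rubblingStepOn_iff.2 ⟨s, w, u, hs, hw, hu, hsu, hwu, fun x => ?_⟩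
  simp only [Pi.add_apply, Nat.cast_add, hq x]
  ring

lemma RubblingReachOn.add {S : Set V} {p q : V → ℕ} (h : RubblingReachOn G S p q) (d : V → ℕ) :
    RubblingReachOn G S (p + d) (q + d) :=
  Relation.ReflTransGen.lift (· + d) (fun _ _ h => h.add d) _ _ h

lemma RubblingStepOn.apply_of_notMem {S : Set V} {p q : V → ℕ} (h : RubblingStepOn G S p q)
    {x : V} (hx : x ∉ S) : q x = p x := by
  obtain ⟨s, w, u, hs, hw, hu, -, -, hq⟩ := rubblingStepOn_iff.1 h
  have := hq x
  simp only [moveChange, pebbleAt, Pi.sub_apply, Pi.single_apply] at this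
  split_ifs at this <;> subst_vars <;> first | contradiction | omega

lemma RubblingReachOn.apply_of_notMem {S : Set V} {p q : V → ℕ} (h : RubblingReachOn G S p q)
    {x : V} (hx : x ∉ S) : q x = p x := by
  induction h with
  | refl => rfl
  | tail _ hstep ih => rw [hstep.apply_of_notMem hx, ih]

lemma RubblingReachOn.rubblingReach_indicator_compl {S : Set V} {p q : V → ℕ}
    (h : RubblingReachOn G S (S.indicator p) q) : RubblingReach G p (q + Sᶜ.indicator p) := by
  simpa [Set.indicator_self_add_compl] using (h.add (Sᶜ.indicator p)).rubblingReach

lemma KReachable.of_rubblingReachOn_indicator {S : Set V} {p q : V → ℕ}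
    (h : RubblingReachOn G S (S.indicator p) q) {v : V} {k : ℕ} (hq : KReachable G q v k) :
    KReachable G p v k := by
  obtain ⟨q', hq', hk⟩ := hq
  have hframe : RubblingReach G (q + Sᶜ.indicator p) (q' + Sᶜ.indicator p) := by
    rw [rubblingReach_eq_rubblingReachOn_univ] at hq' ⊢
    exact hq'.add _
  exact ⟨_, h.rubblingReach_indicator_compl.trans hframe, hk.trans (Nat.le_add_right _ _)⟩

lemma exists_rubblingReach_of_disjoint {S T : Set V} (hST : Disjoint S T) {p q₁ q₂ : V → ℕ}
    (h₁ : RubblingReachOn G S (S.indicator p) q₁) (h₂ : RubblingReachOn G T (T.indicator p) q₂) :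
    ∃ q, RubblingReach G p q ∧ (∀ x, q₁ x ≤ q x) ∧ ∀ x, q₂ x ≤ q x := by
  have hsplit : q₁ + Sᶜ.indicator p = T.indicator p + (q₁ + (S ∪ T)ᶜ.indicator p) := by
    funext x
    by_cases hxS : x ∈ S
    · have hxT : x ∉ T := hST.notMem_of_mem_left hxS
      simp [Set.indicator_of_notMem, hxS, hxT]
    · have hq₁ : q₁ x = 0 := by simp [h₁.apply_of_notMem hxS, hxS]
      by_cases hxT : x ∈ T <;> simp [Set.indicator_of_mem, Set.indicator_of_notMem, hxS, hxT, hq₁]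
  have h₂' := (h₂.add (q₁ + (S ∪ T)ᶜ.indicator p)).rubblingReach
  rw [← hsplit] at h₂'
  refine ⟨_, h₁.rubblingReach_indicator_compl.trans h₂', fun x => ?_, fun x => ?_⟩ <;>
    simp only [Pi.add_apply] <;> omega

variable {W : Type*} [DecidableEq W] {H : SimpleGraph W}

lemma RubblingStepOn.comap (φ : G ≃g H) {S : Set W} {p q : W → ℕ}
    (h : RubblingStepOn H S p q) : RubblingStepOn G (φ ⁻¹' S) (p ∘ φ) (q ∘ φ) := by
  obtain ⟨s, w, u, hs, hw, hu, hsu, hwu, hq⟩ := rubblingStepOn_iff.1 h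
  have hpull : ∀ y x, pebbleAt (φ.symm y) x = pebbleAt y (φ x) := by
    intro y x
    have : x = φ.symm y ↔ φ x = y :=
      ⟨fun h => h ▸ φ.apply_symm_apply y, fun h => h ▸ (φ.symm_apply_apply x).symm⟩
    simp only [pebbleAt, Pi.single_apply, this]
  refine rubblingStepOn_iff.2 ⟨φ.symm s, φ.symm w, φ.symm u, by simpa, by simpa, by simpa,
    φ.symm.map_adj_iff.2 hsu, φ.symm.map_adj_iff.2 hwu, fun x => ?_⟩
  simp only [Function.comp_apply, hq, moveChange, Pi.sub_apply, hpull]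

lemma RubblingReachOn.comap (φ : G ≃g H) {S : Set W} {p q : W → ℕ}
    (h : RubblingReachOn H S p q) : RubblingReachOn G (φ ⁻¹' S) (p ∘ φ) (q ∘ φ) :=
  Relation.ReflTransGen.lift (· ∘ φ) (fun _ _ h => h.comap φ) _ _ h

lemma KReachable.comap (φ : G ≃g H) {p : W → ℕ} {x : V} {k : ℕ}
    (h : KReachable H p (φ x) k) : KReachable G (p ∘ φ) x k := by
  obtain ⟨q, hq, hk⟩ := h
  rw [rubblingReach_eq_rubblingReachOn_univ] at hq
  refine ⟨q ∘ φ, ?_, hk⟩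
  rw [rubblingReach_eq_rubblingReachOn_univ]
  simpa using hq.comap φ

end Rubbling

section Ladder

variable {n : ℕ}

lemma ladder_adj_iff {x y : Fin n × Fin 2} :
    (ladder n).Adj x y ↔
      (x.1 = y.1 ∧ x.2 ≠ y.2) ∨ ((x.1.1 + 1 = y.1.1 ∨ y.1.1 + 1 = x.1.1) ∧ x.2 = y.2) := by
  simp only [ladder, boxProd_adj, pathGraph_adj]
  constructor <;> intro h <;> omega

def ladderReflect (n : ℕ) : ladder n ≃g ladder n where
  toEquiv := Fin.revPerm.prodCongr (Equiv.refl _)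
  map_rel_iff' {x y} := by
    simp only [Equiv.prodCongr_apply, Prod.map, Fin.revPerm_apply, Equiv.refl_apply,
      ladder_adj_iff, Fin.val_rev, Fin.rev_inj]
    omega

@[simp]
lemma ladderReflect_apply (x : Fin n × Fin 2) : ladderReflect n x = (x.1.rev, x.2) := rfl

/-- `m - k` truncates: for `k > m` this is a cell of column `0`. -/
def wallCell (m : Fin n) (k : ℕ) (r : Fin 2) : Fin n × Fin 2 := (⟨m - k, by omega⟩, r)

@[simp]
lemma wallCell_fst_val (m : Fin n) (k : ℕ) (r : Fin 2) : (wallCell m k r).1.1 = m - k := rfl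

@[simp]
lemma wallCell_snd (m : Fin n) (k : ℕ) (r : Fin 2) : (wallCell m k r).2 = r := rfl

lemma eq_wallCell_iff {m : Fin n} {k : ℕ} {r : Fin 2} {x : Fin n × Fin 2} :
    x = wallCell m k r ↔ x.1.1 = m - k ∧ x.2 = r := by
  simp [wallCell, Prod.ext_iff, Fin.ext_iff]

lemma adj_wallCell_one {m : Fin n} {x : Fin n × Fin 2} {r r' : Fin 2} (hr : r ≠ r')
    (hx : (ladder n).Adj x (wallCell m 1 r)) (hxm : x.1 < m) :
    (x.1.1 + 2 = m ∧ x = wallCell m 2 r) ∨ x = wallCell m 1 r' := by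
  rw [ladder_adj_iff, Fin.ext_iff] at hx
  simp only [eq_wallCell_iff, wallCell_fst_val, wallCell_snd] at hx ⊢
  omega

lemma exists_eq_of_adj_of_le_col {m : Fin n} {x u : Fin n × Fin 2} (h : (ladder n).Adj x u)
    (hx : m ≤ x.1) (hu : u.1 < m) : ∃ r, x = (m, r) ∧ u = wallCell m 1 r := by
  rw [ladder_adj_iff] at h
  exact ⟨u.2, Prod.ext (Fin.ext (by omega : x.1.1 = m)) (by omega : x.2 = u.2),
    eq_wallCell_iff.2 ⟨by omega, rfl⟩⟩

end Ladder

section Wall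

variable {n : ℕ} {lo m : Fin n} {j j' : Fin 2} {a b₁ b₂ : ℕ}

/-- Bookkeeping for replaying, left of an unreachable vertex `(m, j)`, a rubbling sequence that
may cross column `m`. Each of the `a` pebbles carried across onto `(m - 1, j')` is replaced by a
pebble on `(m - 2, j')`; each pebble on `(m - 1, j)` merged from a carried pebble and a pebble
on `(m - 1, j')` (counted by `b₁`) or on `(m - 2, j)` (counted by `b₂`) is replaced by that
pebble together with one on `(m - 2, j')`. -/
def wallDebt (m : Fin n) (j j' : Fin 2) (a b₁ b₂ : ℕ) : Fin n × Fin 2 → ℤ :=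
  a • (pebbleAt (wallCell m 2 j') - pebbleAt (wallCell m 1 j')) +
  b₁ • (pebbleAt (wallCell m 2 j') + pebbleAt (wallCell m 1 j') - pebbleAt (wallCell m 1 j)) +
  b₂ • (pebbleAt (wallCell m 2 j') + pebbleAt (wallCell m 2 j) - pebbleAt (wallCell m 1 j))

lemma wallDebt_apply (x : Fin n × Fin 2) : wallDebt m j j' a b₁ b₂ x =
    (a + b₁ + b₂ : ℤ) * pebbleAt (wallCell m 2 j') x + (b₁ - a : ℤ) * pebbleAt (wallCell m 1 j') x
      + b₂ * pebbleAt (wallCell m 2 j) x - (b₁ + b₂ : ℤ) * pebbleAt (wallCell m 1 j) x := by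
  simp only [wallDebt, Pi.add_apply, Pi.sub_apply, Pi.smul_apply]
  simp only [nsmul_eq_mul]
  ring

lemma wallDebt_nonneg {x : Fin n × Fin 2} (hy : x = wallCell m 1 j' → a = 0)
    (hmj : x = wallCell m 1 j → b₁ + b₂ = 0) : 0 ≤ wallDebt m j j' a b₁ b₂ x := by
  rw [wallDebt_apply]
  simp only [pebbleAt, Pi.single_apply]
  split_ifs <;> simp_all <;> omega

lemma wallDebt_wallCell_two (hj : j ≠ j') (hm : 2 ≤ m.1) :
    wallDebt m j j' a b₁ b₂ (wallCell m 2 j') = a + b₁ + b₂ := by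
  have h₁ : wallCell m 2 j' ≠ wallCell m 1 j' := by rw [Ne, eq_wallCell_iff]; simp; omega
  have h₂ : wallCell m 2 j' ≠ wallCell m 2 j := by rw [Ne, eq_wallCell_iff]; simp; omega
  have h₃ : wallCell m 2 j' ≠ wallCell m 1 j := by rw [Ne, eq_wallCell_iff]; simp; omega
  simp [wallDebt_apply, h₁, h₂, h₃]

/-- The debts only arise once `(m - 2, j')` lies in the columns `lo, …, m - 1` of the replay. -/
def WallDominatesWith (lo m : Fin n) (j j' : Fin 2) (a b₁ b₂ : ℕ)
    (S b : Fin n × Fin 2 → ℕ) : Prop :=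
  (0 < a + b₁ + b₂ → lo.1 + 2 ≤ m.1) ∧
    ∀ x : Fin n × Fin 2, x.1 < m → (b x : ℤ) + wallDebt m j j' a b₁ b₂ x ≤ S x

def WallDominates (lo m : Fin n) (j j' : Fin 2) (S b : Fin n × Fin 2 → ℕ) : Prop :=
  ∃ a b₁ b₂, WallDominatesWith lo m j j' a b₁ b₂ S b

variable {S b c : Fin n × Fin 2 → ℕ}

lemma WallDominatesWith.of_eq_add (h : WallDominatesWith lo m j j' a b₁ b₂ S b)
    {S' : Fin n × Fin 2 → ℕ} {a' b₁' b₂' : ℕ} (hflag : 0 < a' + b₁' + b₂' → lo.1 + 2 ≤ m.1)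
    {σ γ N : Fin n × Fin 2 → ℤ} (hS : ∀ x, (S' x : ℤ) = S x + σ x)
    (hc : ∀ x, (c x : ℤ) = b x + γ x) (hN : ∀ x : Fin n × Fin 2, x.1 < m → 0 ≤ N x)
    (heq : wallDebt m j j' a b₁ b₂ + σ = γ + wallDebt m j j' a' b₁' b₂' + N) :
    WallDominatesWith lo m j j' a' b₁' b₂' S' c := by
  refine ⟨hflag, fun x hx => ?_⟩
  have := congrFun heq x
  simp only [Pi.add_apply] at this
  linarith [h.2 x hx, hS x, hc x, hN x hx]

lemma WallDominatesWith.exists_skip (h : WallDominatesWith lo m j j' a b₁ b₂ S b)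
    {a' b₁' b₂' : ℕ} (hflag : 0 < a' + b₁' + b₂' → lo.1 + 2 ≤ m.1) {γ N : Fin n × Fin 2 → ℤ}
    (hc : ∀ x, (c x : ℤ) = b x + γ x) (hN : ∀ x : Fin n × Fin 2, x.1 < m → 0 ≤ N x)
    (heq : wallDebt m j j' a b₁ b₂ = γ + wallDebt m j j' a' b₁' b₂' + N) :
    ∃ S', RubblingReachOn (ladder n) {x | lo ≤ x.1 ∧ x.1 < m} S S' ∧
      WallDominates lo m j j' S' c :=
  ⟨S, .refl, a', b₁', b₂', h.of_eq_add hflag (σ := 0) (fun x => by simp) hc hN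
    (by simpa using heq)⟩

lemma WallDominatesWith.pebbleAt_add_le (h : WallDominatesWith lo m j j' a b₁ b₂ S b)
    {s w : Fin n × Fin 2} (hs : s.1 < m) (hw : w.1 < m)
    (hle : ∀ x, x = s ∨ x = w → pebbleAt s x + pebbleAt w x ≤ b x + wallDebt m j j' a b₁ b₂ x)
    (x : Fin n × Fin 2) : pebbleAt s x + pebbleAt w x ≤ S x := by
  by_cases hx : x = s ∨ x = w
  · have hxm : x.1 < m := by rcases hx with rfl | rfl <;> assumption
    linarith [hle x hx, h.2 x hxm]
  · simp only [not_or] at hx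
    simp [pebbleAt, hx.1, hx.2]

lemma WallDominatesWith.exists_step (h : WallDominatesWith lo m j j' a b₁ b₂ S b)
    {s w u : Fin n × Fin 2} (hs : lo ≤ s.1 ∧ s.1 < m) (hw : lo ≤ w.1 ∧ w.1 < m)
    (hu : lo ≤ u.1 ∧ u.1 < m) (hsu : (ladder n).Adj s u) (hwu : (ladder n).Adj w u)
    (hle : ∀ x, x = s ∨ x = w → pebbleAt s x + pebbleAt w x ≤ b x + wallDebt m j j' a b₁ b₂ x)
    {a' b₁' b₂' : ℕ} (hflag : 0 < a' + b₁' + b₂' → lo.1 + 2 ≤ m.1) {γ N : Fin n × Fin 2 → ℤ}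
    (hc : ∀ x, (c x : ℤ) = b x + γ x) (hN : ∀ x : Fin n × Fin 2, x.1 < m → 0 ≤ N x)
    (heq : wallDebt m j j' a b₁ b₂ + moveChange s w u = γ + wallDebt m j j' a' b₁' b₂' + N) :
    ∃ S', RubblingReachOn (ladder n) {x | lo ≤ x.1 ∧ x.1 < m} S S' ∧
      WallDominates lo m j j' S' c := by
  obtain ⟨S', hSS', hS'⟩ := exists_rubblingStepOn (S := {x | lo ≤ x.1 ∧ x.1 < m}) hs hw hu
    hsu hwu (h.pebbleAt_add_le hs.2 hw.2 hle)
  exact ⟨S', .single hSS', a', b₁', b₂', h.of_eq_add hflag hS' hc hN heq⟩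

lemma WallDominatesWith.exists_of_step_beyond_wall (h : WallDominatesWith lo m j j' a b₁ b₂ S b)
    {s w u : Fin n × Fin 2} (hc : ∀ x, (c x : ℤ) = b x + moveChange s w u x) (hu : m ≤ u.1) :
    ∃ S', RubblingReachOn (ladder n) {x | lo ≤ x.1 ∧ x.1 < m} S S' ∧
      WallDominates lo m j j' S' c := by
  refine h.exists_skip h.1 hc (N := pebbleAt s + pebbleAt w - pebbleAt u) (fun x hx => ?_)
    (by unfold moveChange; abel)
  have hxu : x ≠ u := by rintro rfl; exact absurd hu (not_le.2 hx)
  simp only [Pi.add_apply, Pi.sub_apply, pebbleAt, Pi.single_eq_of_ne hxu, sub_zero]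
  exact add_nonneg (pebbleAt_nonneg s x) (pebbleAt_nonneg w x)

lemma WallDominatesWith.exists_of_step_across_wall (hj : j ≠ j')
    (h : WallDominatesWith lo m j j' a b₁ b₂ S b) (hbv : ¬ KReachable (ladder n) b (m, j) 1)
    {s w u : Fin n × Fin 2} (hw : lo ≤ w.1) (hsu : (ladder n).Adj s u)
    (hwu : (ladder n).Adj w u) (hc : ∀ x, (c x : ℤ) = b x + moveChange s w u x)
    (hs : m ≤ s.1) (hu : u.1 < m) :
    ∃ S', RubblingReachOn (ladder n) {x | lo ≤ x.1 ∧ x.1 < m} S S' ∧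
      WallDominates lo m j j' S' c := by
  have hsrc := pebbleAt_add_pebbleAt_le hsu.ne.symm hwu.ne.symm hc
  obtain ⟨r, rfl, rfl⟩ := exists_eq_of_adj_of_le_col hsu hs hu
  have hr : r = j' := by
    by_contra hr
    obtain rfl : r = j := by omega
    have := hsrc (m, r)
    simp only [pebbleAt, Pi.single_eq_same] at this
    exact hbv ⟨b, .refl, by linarith [pebbleAt_nonneg w (m, r)]⟩
  subst r
  have hzv : (ladder n).Adj (m, j') (m, j) := by rw [ladder_adj_iff]; simp [Ne.symm hj]
  have hmv : (ladder n).Adj (wallCell m 1 j) (m, j) := by rw [ladder_adj_iff]; simp; omega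
  have hw' : w.1.1 + 2 = m ∧ w = wallCell m 2 j' := by
    rcases lt_or_ge w.1 m with hwm | hwm
    · rcases adj_wallCell_one hj.symm hwu hwm with hw' | rfl
      · exact hw'
      · exact absurd (kReachable_of_pebbleAt_add_le hzv hmv hsrc) hbv
    · obtain ⟨r, rfl, hr⟩ := exists_eq_of_adj_of_le_col hwu hwm hu
      have hr : r = j' := (congrArg Prod.snd hr).symm
      subst r
      exact absurd (kReachable_of_pebbleAt_add_le hzv hzv hsrc) hbv
  obtain ⟨hwcol, rfl⟩ := hw'
  refine h.exists_skip (a' := a + 1) (b₁' := b₁) (b₂' := b₂) (fun _ => by omega) hc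
    (N := pebbleAt (m, j')) (fun x _ => pebbleAt_nonneg _ x) ?_
  simp only [wallDebt, moveChange]
  module

lemma WallDominatesWith.exists_of_step_from_carried (hj : j ≠ j')
    (h : WallDominatesWith lo m j j' (a + 1) b₁ b₂ S b) {w u : Fin n × Fin 2}
    (hsu : (ladder n).Adj (wallCell m 1 j') u) (hwu : (ladder n).Adj w u) (hw : w.1 < m)
    (hu : u.1 < m) (hc : ∀ x, (c x : ℤ) = b x + moveChange (wallCell m 1 j') w u x) :
    ∃ S', RubblingReachOn (ladder n) {x | lo ≤ x.1 ∧ x.1 < m} S S' ∧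
      WallDominates lo m j j' S' c := by
  have hflag : lo.1 + 2 ≤ m.1 := h.1 (by omega)
  rcases adj_wallCell_one hj.symm hsu.symm hu with ⟨-, rfl⟩ | rfl
  · refine h.exists_skip (a' := a) (b₁' := b₁) (b₂' := b₂) (fun _ => hflag) hc
      (N := pebbleAt w) (fun x _ => pebbleAt_nonneg w x) ?_
    simp only [wallDebt, moveChange]
    module
  · rcases adj_wallCell_one hj hwu hw with ⟨-, rfl⟩ | rfl
    · refine h.exists_skip (a' := a) (b₁' := b₁) (b₂' := b₂ + 1) (fun _ => hflag) hc
        (N := 0) (fun _ _ => le_rfl) ?_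
      simp only [wallDebt, moveChange]
      module
    · refine h.exists_skip (a' := a) (b₁' := b₁ + 1) (b₂' := b₂) (fun _ => hflag) hc
        (N := 0) (fun _ _ => le_rfl) ?_
      simp only [wallDebt, moveChange]
      module

/-- The pebble on `(m - 2, j')` backing a merged pebble on `(m - 1, j)` can stand in for it as
the source of a move. -/
lemma pebbleAt_add_le_add_wallDebt (hj : j ≠ j') (hm : 2 ≤ m.1) (hb : 0 < b₁ + b₂)
    {w : Fin n × Fin 2} (hsrc : ∀ x, pebbleAt (wallCell m 1 j) x + pebbleAt w x ≤ b x)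
    (hwm : w ≠ wallCell m 1 j) (hwa : w = wallCell m 1 j' → a = 0) (x : Fin n × Fin 2)
    (hx : x = wallCell m 2 j' ∨ x = w) :
    pebbleAt (wallCell m 2 j') x + pebbleAt w x ≤ b x + wallDebt m j j' a b₁ b₂ x := by
  have hYm : wallCell m 1 j ≠ wallCell m 2 j' := by rw [Ne, eq_wallCell_iff]; simp; omega
  by_cases hxY : x = wallCell m 2 j'
  · subst hxY
    have := hsrc (wallCell m 2 j')
    simp only [pebbleAt, Pi.single_eq_same, Pi.single_eq_of_ne hYm.symm] at this ⊢
    rw [wallDebt_wallCell_two hj hm]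
    omega
  · obtain rfl : x = w := hx.resolve_left hxY
    have := hsrc x
    have := wallDebt_nonneg (b₁ := b₁) (b₂ := b₂) hwa (fun h => absurd h hwm)
    simp only [pebbleAt, Pi.single_eq_same, Pi.single_eq_of_ne hwm, Pi.single_eq_of_ne hxY]
      at *
    omega

lemma WallDominatesWith.exists_of_step_from_merged (hj : j ≠ j')
    (h : WallDominatesWith lo m j j' a b₁ b₂ S b) (hb : 0 < b₁ + b₂)
    (hbv : ¬ KReachable (ladder n) b (m, j) 1) {w u : Fin n × Fin 2}
    (hsu : (ladder n).Adj (wallCell m 1 j) u) (hwu : (ladder n).Adj w u)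
    (hw : lo ≤ w.1 ∧ w.1 < m) (hu : lo ≤ u.1 ∧ u.1 < m) (hwa : w = wallCell m 1 j' → a = 0)
    (hc : ∀ x, (c x : ℤ) = b x + moveChange (wallCell m 1 j) w u x) :
    ∃ S', RubblingReachOn (ladder n) {x | lo ≤ x.1 ∧ x.1 < m} S S' ∧
      WallDominates lo m j j' S' c := by
  have hflag : lo.1 + 2 ≤ m.1 := h.1 (by omega)
  have hsrc := pebbleAt_add_pebbleAt_le hsu.ne.symm hwu.ne.symm hc
  have hmv : (ladder n).Adj (wallCell m 1 j) (m, j) := by rw [ladder_adj_iff]; simp; omega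
  have hwm : w ≠ wallCell m 1 j := by
    rintro rfl
    exact hbv (kReachable_of_pebbleAt_add_le hmv hmv hsrc)
  have hle := pebbleAt_add_le_add_wallDebt hj (by omega) hb hsrc hwm hwa
  have hY : lo ≤ (wallCell m 2 j').1 ∧ (wallCell m 2 j').1 < m := by
    simp only [Fin.le_def, Fin.lt_def, wallCell_fst_val]; omega
  have hYW : (ladder n).Adj (wallCell m 2 j') (wallCell m 2 j) := by
    simp only [ladder_adj_iff, Fin.ext_iff, wallCell_fst_val, wallCell_snd, true_and]
    omega
  have hYy : (ladder n).Adj (wallCell m 2 j') (wallCell m 1 j') := by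
    simp only [ladder_adj_iff, Fin.ext_iff, wallCell_fst_val, wallCell_snd, and_true]
    omega
  rcases adj_wallCell_one hj hsu.symm hu.2 with ⟨-, rfl⟩ | rfl
  · rcases Nat.eq_zero_or_pos b₂ with rfl | hb₂
    · obtain ⟨b₁, rfl⟩ : ∃ k, b₁ = k + 1 := ⟨b₁ - 1, by omega⟩
      refine h.exists_step (a' := a) (b₁' := b₁) (b₂' := 0) hY hw hu hYW hwu hle
        (fun _ => hflag) hc (N := pebbleAt (wallCell m 1 j')) (fun x _ => pebbleAt_nonneg _ x) ?_
      simp only [wallDebt, moveChange]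
      module
    · obtain ⟨b₂, rfl⟩ : ∃ k, b₂ = k + 1 := ⟨b₂ - 1, by omega⟩
      refine h.exists_skip (a' := a) (b₁' := b₁) (b₂' := b₂) (fun _ => hflag) hc
        (N := pebbleAt w + pebbleAt (wallCell m 2 j'))
        (fun x _ => add_nonneg (pebbleAt_nonneg _ x) (pebbleAt_nonneg _ x)) ?_
      simp only [wallDebt, moveChange]
      module
  · rcases Nat.eq_zero_or_pos b₁ with rfl | hb₁
    · obtain ⟨b₂, rfl⟩ : ∃ k, b₂ = k + 1 := ⟨b₂ - 1, by omega⟩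
      refine h.exists_step (a' := a) (b₁' := 0) (b₂' := b₂) hY hw hu hYy hwu hle
        (fun _ => hflag) hc (N := pebbleAt (wallCell m 2 j)) (fun x _ => pebbleAt_nonneg _ x) ?_
      simp only [wallDebt, moveChange]
      module
    · obtain ⟨b₁, rfl⟩ : ∃ k, b₁ = k + 1 := ⟨b₁ - 1, by omega⟩
      refine h.exists_skip (a' := a) (b₁' := b₁) (b₂' := b₂) (fun _ => hflag) hc
        (N := pebbleAt w + pebbleAt (wallCell m 2 j'))
        (fun x _ => add_nonneg (pebbleAt_nonneg _ x) (pebbleAt_nonneg _ x)) ?_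
      simp only [wallDebt, moveChange]
      module

lemma WallDominatesWith.exists_of_step_replay (h : WallDominatesWith lo m j j' a b₁ b₂ S b)
    {s w u : Fin n × Fin 2} (hs : lo ≤ s.1 ∧ s.1 < m) (hw : lo ≤ w.1 ∧ w.1 < m)
    (hu : lo ≤ u.1 ∧ u.1 < m) (hsu : (ladder n).Adj s u) (hwu : (ladder n).Adj w u)
    (hDs : 0 ≤ wallDebt m j j' a b₁ b₂ s) (hDw : 0 ≤ wallDebt m j j' a b₁ b₂ w)
    (hc : ∀ x, (c x : ℤ) = b x + moveChange s w u x) :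
    ∃ S', RubblingReachOn (ladder n) {x | lo ≤ x.1 ∧ x.1 < m} S S' ∧
      WallDominates lo m j j' S' c := by
  have hsrc := pebbleAt_add_pebbleAt_le hsu.ne.symm hwu.ne.symm hc
  refine h.exists_step hs hw hu hsu hwu (fun x hx => ?_) h.1 hc (N := 0) (fun _ _ => le_rfl)
    (by abel)
  rcases hx with rfl | rfl <;> linarith [hsrc x]

lemma WallDominates.exists_of_step (hj : j ≠ j') (h : WallDominates lo m j j' S b)
    (hbv : ¬ KReachable (ladder n) b (m, j) 1)
    (hbc : RubblingStepOn (ladder n) {x | lo ≤ x.1} b c) :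
    ∃ S', RubblingReachOn (ladder n) {x | lo ≤ x.1 ∧ x.1 < m} S S' ∧
      WallDominates lo m j j' S' c := by
  obtain ⟨a, b₁, b₂, h⟩ := h
  obtain ⟨s, w, u, hs, hw, hu, hsu, hwu, hc⟩ := rubblingStepOn_iff.1 hbc
  have hc' : ∀ x, (c x : ℤ) = b x + moveChange w s u x := by
    simpa only [moveChange_comm] using hc
  rcases le_or_gt m u.1 with hmu | hum
  · exact h.exists_of_step_beyond_wall hc hmu
  rcases le_or_gt m s.1 with hms | hsm
  · exact h.exists_of_step_across_wall hj hbv hw hsu hwu hc hms hum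
  rcases le_or_gt m w.1 with hmw | hwm
  · exact h.exists_of_step_across_wall hj hbv hs hwu hsu hc' hmw hum
  by_cases hC : (s = wallCell m 1 j' ∨ w = wallCell m 1 j') ∧ 0 < a
  · obtain ⟨a, rfl⟩ : ∃ k, a = k + 1 := ⟨a - 1, by omega⟩
    rcases hC.1 with rfl | rfl
    · exact h.exists_of_step_from_carried hj hsu hwu hwm hum hc
    · exact h.exists_of_step_from_carried hj hwu hsu hsm hum hc'
  have hCs : ∀ x, x = s ∨ x = w → x = wallCell m 1 j' → a = 0 := by
    rintro x hx rfl; by_contra ha; exact hC ⟨hx.imp Eq.symm Eq.symm, by omega⟩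
  by_cases hD : (s = wallCell m 1 j ∨ w = wallCell m 1 j) ∧ 0 < b₁ + b₂
  · rcases hD.1 with rfl | rfl
    · exact h.exists_of_step_from_merged hj hD.2 hbv hsu hwu ⟨hw, hwm⟩ ⟨hu, hum⟩
        (hCs w (.inr rfl)) hc
    · exact h.exists_of_step_from_merged hj hD.2 hbv hwu hsu ⟨hs, hsm⟩ ⟨hu, hum⟩
        (hCs s (.inl rfl)) hc'
  have hDs : ∀ x, x = s ∨ x = w → x = wallCell m 1 j → b₁ + b₂ = 0 := by
    rintro x hx rfl; by_contra hb; exact hD ⟨hx.imp Eq.symm Eq.symm, by omega⟩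
  exact h.exists_of_step_replay ⟨hs, hsm⟩ ⟨hw, hwm⟩ ⟨hu, hum⟩ hsu hwu
    (wallDebt_nonneg (hCs s (.inl rfl)) (hDs s (.inl rfl)))
    (wallDebt_nonneg (hCs w (.inr rfl)) (hDs w (.inr rfl))) hc

lemma WallDominatesWith.le_of_col_eq (h : WallDominatesWith lo m j j' a b₁ b₂ S b)
    {t : Fin n × Fin 2} (ht : t.1 = lo) (hlo : lo < m) : b t ≤ S t := by
  have hD : 0 ≤ wallDebt m j j' a b₁ b₂ t := by
    refine wallDebt_nonneg (fun htm => ?_) (fun htm => ?_) <;>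
    · have := h.1
      rw [eq_wallCell_iff] at htm
      omega
  have := h.2 t (ht ▸ hlo)
  omega

lemma exists_wallDominates_of_rubblingReachOn {P : Fin n × Fin 2 → ℕ} (hj : j ≠ j')
    (hv : ¬ KReachable (ladder n) P (m, j) 1)
    (hb : RubblingReachOn (ladder n) {x | lo ≤ x.1} ({x | lo ≤ x.1}.indicator P) b) :
    ∃ S, RubblingReachOn (ladder n) {x | lo ≤ x.1 ∧ x.1 < m}
      ({x | lo ≤ x.1 ∧ x.1 < m}.indicator P) S ∧ WallDominates lo m j j' S b := by
  induction hb with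
  | refl =>
    refine ⟨_, .refl, 0, 0, 0, by simp, fun x hx => ?_⟩
    by_cases hx' : lo ≤ x.1 <;> simp [wallDebt, hx, hx']
  | tail hab hbc ih =>
    obtain ⟨S, hS, hdom⟩ := ih
    have hbv : ¬ KReachable (ladder n) _ (m, j) 1 :=
      fun h => hv (KReachable.of_rubblingReachOn_indicator hab h)
    obtain ⟨S', hSS', hdom'⟩ := hdom.exists_of_step hj hbv hbc
    exact ⟨S', hS.trans hSS', hdom'⟩

theorem RightKReachable.exists_rubblingReachOn_before_wall {P : Fin n × Fin 2 → ℕ}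
    {l : Fin n × Fin 2} {k : ℕ} (hl : RightKReachable n P l k) (hlm : l.1 < m)
    (hv : ¬ KReachable (ladder n) P (m, j) 1) :
    ∃ S, RubblingReachOn (ladder n) {x | l.1 ≤ x.1 ∧ x.1 < m}
      ({x | l.1 ≤ x.1 ∧ x.1 < m}.indicator P) S ∧ k ≤ S l := by
  obtain ⟨q, hq, hk⟩ := hl
  obtain ⟨j', hj⟩ : ∃ j', j ≠ j' := ⟨j + 1, by omega⟩
  have hinit : (fun x => if l.1 ≤ x.1 then P x else 0) = {x | l.1 ≤ x.1}.indicator P := by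
    ext x; simp [Set.indicator_apply]
  rw [hinit] at hq
  obtain ⟨S, hS, a, b₁, b₂, hdom⟩ := exists_wallDominates_of_rubblingReachOn hj hv hq
  exact ⟨S, hS, hk.trans (hdom.le_of_col_eq rfl hlm)⟩

end Wall

section Reflection

variable {n : ℕ}

theorem LeftKReachable.exists_rubblingReachOn_after_wall {P : Fin n × Fin 2 → ℕ}
    {r : Fin n × Fin 2} {k : ℕ} {m : Fin n} {j : Fin 2} (hr : LeftKReachable n P r k)
    (hmr : m < r.1) (hv : ¬ KReachable (ladder n) P (m, j) 1) :
    ∃ S, RubblingReachOn (ladder n) {x | m < x.1 ∧ x.1 ≤ r.1}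
      ({x | m < x.1 ∧ x.1 ≤ r.1}.indicator P) S ∧ k ≤ S r := by
  have hr' : RightKReachable n (P ∘ ladderReflect n) (ladderReflect n r) k := by
    obtain ⟨q, hq, hk⟩ := hr
    refine ⟨q ∘ ladderReflect n, ?_, by simpa using hk⟩
    convert hq.comap (ladderReflect n) using 1 <;> ext x
    · simp [Fin.rev_le_iff]
    · simp only [Function.comp_apply, ladderReflect_apply, Fin.rev_le_iff]
      congr 1
  have hv' : ¬ KReachable (ladder n) (P ∘ ladderReflect n) (m.rev, j) 1 :=
    fun h => hv (by simpa [Function.comp_def] using h.comap (ladderReflect n) (x := (m, j)))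
  obtain ⟨S, hS, hk⟩ := hr'.exists_rubblingReachOn_before_wall (by simpa using hmr) hv'
  refine ⟨S ∘ ladderReflect n, ?_, by simpa using hk⟩
  convert hS.comap (ladderReflect n) using 1 <;> ext x
  · simp [Fin.lt_rev_iff, and_comm]
  · simp [Set.indicator_apply, Fin.lt_rev_iff, and_comm]

end Reflection

theorem dependent_implies_between_reachable_general (n : ℕ) (p : Fin n × Fin 2 → ℕ)
    (l r : Fin n × Fin 2) (kl kr : ℕ) (hkl : 1 ≤ kl) (hkr : 1 ≤ kr)
    (hl : RightKReachable n p l kl) (hr : LeftKReachable n p r kr)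
    (hdep : ¬ ∃ q, RubblingReach (ladder n) p q ∧ 1 ≤ q l ∧ 1 ≤ q r) :
    ∀ v : Fin n × Fin 2, l.1 < v.1 → v.1 < r.1 → KReachable (ladder n) p v 1 := by
  intro v hlv hvr
  by_contra hv
  obtain ⟨S₁, h₁, hS₁⟩ := hl.exists_rubblingReachOn_before_wall hlv hv
  obtain ⟨S₂, h₂, hS₂⟩ := hr.exists_rubblingReachOn_after_wall hvr hv
  have hdisj : Disjoint {x : Fin n × Fin 2 | l.1 ≤ x.1 ∧ x.1 < v.1}
      {x | v.1 < x.1 ∧ x.1 ≤ r.1} :=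
    Set.disjoint_left.2 fun x hx₁ hx₂ => absurd hx₁.2 (not_lt.2 hx₂.1.le)
  obtain ⟨q, hq, hq₁, hq₂⟩ := exists_rubblingReach_of_disjoint hdisj h₁ h₂
  exact hdep ⟨q, hq, by have := hq₁ l; omega, by have := hq₂ r; omega⟩

/-- If `l` is right `k_l`-reachable and `r` is left `k_r`-reachable but `l` and `r` are
not independently reachable, then every vertex in a column strictly between the columns
of `l` and `r` is reachable. -/
theorem dependent_implies_between_reachable (n : ℕ) (p : Fin n × Fin 2 → ℕ)
    (l r : Fin n × Fin 2) (hlr : l.1 < r.1) (kl kr : ℕ) (hkl : 1 ≤ kl) (hkr : 1 ≤ kr)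
    (hl : RightKReachable n p l kl) (hr : LeftKReachable n p r kr)
    (hdep : ¬ ∃ q, RubblingReach (ladder n) p q ∧ 1 ≤ q l ∧ 1 ≤ q r) :
    ∀ v : Fin n × Fin 2, l.1 < v.1 → v.1 < r.1 → KReachable (ladder n) p v 1 :=
  dependent_implies_between_reachable_general n p l r kl kr hkl hkr hl hr hdep
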